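/- Let P = [[-1, 0], [1, 1]], Q = [[2, -1], [-1, 1]], S = [[-1, 1], [0, 1]] (2×2 integer matrices) and A = [[P, Q], [O_2, S]]. Then A ∈ Sp(4, ℤ), ker(S - I_2) ⊆ ℚ² is one-dimensional spanned by (1, 2), and the signature of the form ⟨x,y⟩ = ᵗx·ᵗQ·y on ker(S - I_2) equals 1. -/

import Mathlib

/-! Writing `A = [[P, Q], [0, S]]`, one has `ᵗA J A = [[0, ᵗP S], [-ᵗS P, ᵗQ S - ᵗS Q]]`, so `A` is
symplectic exactly when `ᵗP S = I` and `ᵗQ S` is symmetric. Here `S - I = [[-2, 1], [0, 0]]`, whose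
kernel is the line `x₂ = 2 x₁` spanned by `(1, 2)`, and on that line the form is `x ↦ 2 x₁²`.
A positive definite form has signature equal to the dimension, which is `1`. -/

open Matrix

/-- `A ∈ Sp(2g, ℤ)` (with index set `n` of cardinality `g`) iff `ᵗA·J·A = J`
where `J = [[0, I], [-I, 0]]`. -/
def IsSymplectic {n : Type*} [Fintype n] [DecidableEq n]
    (A : Matrix (n ⊕ n) (n ⊕ n) ℤ) : Prop :=
  Aᵀ * fromBlocks 0 1 (-1) 0 * A = fromBlocks 0 1 (-1) 0

/-- The signature of a (symmetric) bilinear form. -/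
noncomputable def formSign {R : Type*} [Field R] [LinearOrder R] [IsStrictOrderedRing R] {V : Type*}
    [AddCommGroup V] [Module R V] (B : V → V → R) : ℤ :=
  ((sSup {n : ℕ | ∃ W : Submodule R V, Module.finrank R W = n ∧
      ∀ x ∈ W, x ≠ 0 → 0 < B x x} : ℕ) : ℤ)
  - ((sSup {n : ℕ | ∃ W : Submodule R V, Module.finrank R W = n ∧
      ∀ x ∈ W, x ≠ 0 → B x x < 0} : ℕ) : ℤ)

/-- `φ_g^V` of the upper-triangular symplectic matrix `[[P, Q], [0, S]]`:
the signature of the form `⟨x, y⟩ = ᵗx·ᵗQ·y` on `ker(S - I) ⊆ ℚ^g`. -/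
noncomputable def phiV {n : Type*} [Fintype n] [DecidableEq n]
    (Q S : Matrix n n ℤ) : ℤ :=
  formSign (fun x y : LinearMap.ker ((S.map ((↑) : ℤ → ℚ) - 1).mulVecLin) =>
    (x : n → ℚ) ⬝ᵥ (Q.map ((↑) : ℤ → ℚ))ᵀ *ᵥ (y : n → ℚ))

theorem isSymplectic_fromBlocks_zero_iff {n : Type*} [Fintype n] [DecidableEq n]
    (P Q S : Matrix n n ℤ) :
    IsSymplectic (fromBlocks P Q 0 S) ↔ Pᵀ * S = 1 ∧ Qᵀ * S = Sᵀ * Q := by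
  have hSP : Sᵀ * P = (Pᵀ * S)ᵀ := by rw [transpose_mul, transpose_transpose]
  simp only [IsSymplectic, fromBlocks_transpose, fromBlocks_multiply, fromBlocks_inj, mul_zero,
    transpose_zero, mul_neg, mul_one, neg_zero, add_zero, zero_mul, zero_add, neg_mul, neg_inj,
    true_and, hSP, neg_add_eq_zero]
  constructor
  · rintro ⟨hPS, -, hQS⟩
    exact ⟨hPS, hQS.symm⟩
  · rintro ⟨hPS, hQS⟩
    exact ⟨hPS, by rw [hPS, transpose_one], hQS.symm⟩

section Signature

variable {R V : Type*} [Field R] [AddCommGroup V] [Module R V]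

theorem sSup_finrank_subspaces_of_forall [FiniteDimensional R V] {p : V → Prop}
    (hp : ∀ x, x ≠ 0 → p x) :
    sSup {n : ℕ | ∃ W : Submodule R V, Module.finrank R W = n ∧ ∀ x ∈ W, x ≠ 0 → p x}
      = Module.finrank R V := by
  have htop : Module.finrank R V ∈
      {n : ℕ | ∃ W : Submodule R V, Module.finrank R W = n ∧ ∀ x ∈ W, x ≠ 0 → p x} :=
    ⟨⊤, finrank_top R V, fun x _ => hp x⟩
  refine IsGreatest.csSup_eq ⟨htop, ?_⟩
  rintro n ⟨W, rfl, -⟩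
  exact Submodule.finrank_le W

theorem sSup_finrank_subspaces_of_forall_not {p : V → Prop} (hp : ∀ x, x ≠ 0 → ¬ p x) :
    sSup {n : ℕ | ∃ W : Submodule R V, Module.finrank R W = n ∧ ∀ x ∈ W, x ≠ 0 → p x} = 0 := by
  have hbot : ∀ W : Submodule R V, (∀ x ∈ W, x ≠ 0 → p x) → W = ⊥ := fun W hW =>
    (Submodule.eq_bot_iff W).2 fun x hx => by_contra fun hx0 => hp x hx0 (hW x hx hx0)
  refine IsGreatest.csSup_eq ⟨⟨⊥, finrank_bot R V, by simp⟩, ?_⟩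
  rintro n ⟨W, rfl, hW⟩
  rw [hbot W hW, finrank_bot]

theorem formSign_eq_finrank_of_pos [LinearOrder R] [IsStrictOrderedRing R] [FiniteDimensional R V]
    {B : V → V → R} (hB : ∀ x, x ≠ 0 → 0 < B x x) : formSign B = Module.finrank R V := by
  rw [formSign, sSup_finrank_subspaces_of_forall hB,
    sSup_finrank_subspaces_of_forall_not fun x hx => (hB x hx).not_gt, Nat.cast_zero, sub_zero]

end Signature

theorem s1_map_sub_one :
    (!![-1, 1; 0, 1] : Matrix (Fin 2) (Fin 2) ℤ).map ((↑) : ℤ → ℚ) - 1 = !![-2, 1; 0, 0] := by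
  ext i j
  fin_cases i <;> fin_cases j <;> norm_num

theorem mem_ker_s1_sub_one_iff (x : Fin 2 → ℚ) :
    x ∈ LinearMap.ker (((!![-1, 1; 0, 1] : Matrix (Fin 2) (Fin 2) ℤ).map
      ((↑) : ℤ → ℚ) - 1).mulVecLin) ↔ x 1 = 2 * x 0 := by
  rw [LinearMap.mem_ker, mulVecLin_apply, s1_map_sub_one, funext_iff, Fin.forall_fin_two]
  simp only [mulVec, dotProduct, Fin.isValue, of_apply, cons_val', cons_val_fin_one, cons_val_zero,
    Fin.sum_univ_two, neg_mul, cons_val_one, one_mul, Pi.zero_apply, zero_mul, add_zero, and_true]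
  constructor <;> intro h <;> linarith

theorem ker_s1_sub_one :
    LinearMap.ker (((!![-1, 1; 0, 1] : Matrix (Fin 2) (Fin 2) ℤ).map
      ((↑) : ℤ → ℚ) - 1).mulVecLin) = Submodule.span ℚ {![(1 : ℚ), 2]} := by
  ext x
  rw [mem_ker_s1_sub_one_iff, Submodule.mem_span_singleton]
  constructor
  · intro hx
    exact ⟨x 0, by ext i; fin_cases i <;> simp [hx, mul_comm]⟩
  · rintro ⟨c, rfl⟩
    simp [mul_comm]

theorem s1_form_of_mem_ker {x : Fin 2 → ℚ}
    (hx : x ∈ LinearMap.ker (((!![-1, 1; 0, 1] : Matrix (Fin 2) (Fin 2) ℤ).map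
      ((↑) : ℤ → ℚ) - 1).mulVecLin)) :
    x ⬝ᵥ ((!![2, -1; -1, 1] : Matrix (Fin 2) (Fin 2) ℤ).map ((↑) : ℤ → ℚ))ᵀ *ᵥ x
      = 2 * x 0 ^ 2 := by
  rw [mem_ker_s1_sub_one_iff] at hx
  simp only [dotProduct, mulVec, Int.reduceNeg, transpose_apply, map_apply, of_apply, cons_val',
    cons_val_fin_one, Fin.sum_univ_two, Fin.isValue, cons_val_zero, cons_val_one, hx, Int.cast_ofNat,
    Int.cast_neg, Int.cast_one, neg_mul, one_mul, add_neg_cancel, mul_zero, zero_add]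
  ring

theorem s1_form_pos_of_mem_ker {x : Fin 2 → ℚ}
    (hx : x ∈ LinearMap.ker (((!![-1, 1; 0, 1] : Matrix (Fin 2) (Fin 2) ℤ).map
      ((↑) : ℤ → ℚ) - 1).mulVecLin)) (hx0 : x ≠ 0) :
    0 < x ⬝ᵥ ((!![2, -1; -1, 1] : Matrix (Fin 2) (Fin 2) ℤ).map ((↑) : ℤ → ℚ))ᵀ *ᵥ x := by
  have hx1 := (mem_ker_s1_sub_one_iff x).1 hx
  have h0 : x 0 ≠ 0 := fun hz => hx0 (by ext i; fin_cases i <;> simp [hz, hx1])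
  rw [s1_form_of_mem_ker hx]
  positivity

/-- The computation of `φ_2^V(s_1) = 1`. -/
theorem phiV_s1 :
    IsSymplectic (fromBlocks !![-1, 0; 1, 1] !![2, -1; -1, 1] 0
        !![-1, 1; 0, 1]) ∧
    LinearMap.ker (((!![-1, 1; 0, 1] : Matrix (Fin 2) (Fin 2) ℤ).map
          ((↑) : ℤ → ℚ) - 1).mulVecLin)
      = Submodule.span ℚ {![(1 : ℚ), 2]} ∧
    phiV !![2, -1; -1, 1] !![-1, 1; 0, 1] = 1 := by
  refine ⟨(isSymplectic_fromBlocks_zero_iff _ _ _).2 ⟨by decide, by decide⟩, ker_s1_sub_one, ?_⟩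
  rw [phiV, formSign_eq_finrank_of_pos fun x hx0 =>
    s1_form_pos_of_mem_ker x.2 (Submodule.coe_eq_zero.not.2 hx0), ker_s1_sub_one,
    finrank_span_singleton (by decide), Nat.cast_one]
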